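/- arXiv:1201.3600 — 3 statements merged into one kernel-verified Lean document; each statement's English description precedes it below -/
import Mathlib

section
/- Let (W, D, D⊥) be a CR datum. Then the subspace W^{⊥g} ∩ (J(D⊥))^{⊥g} (the g-orthogonal complement of J(D⊥) inside W^{⊥g}) is J-invariant (holomorphic). -/
/-!
A Norden metric makes `J` self-adjoint: `g (J x) y = g x (J y)`. Hence `x ⊥ J U` exactly when
`J x ⊥ U`. Writing `W^{⊥g} = D^{⊥g} ∩ Dp^{⊥g}`, the three conditions cutting out
`W^{⊥g} ∩ (J Dp)^{⊥g}` are permuted by `J`: `D^{⊥g}` is fixed because `J D = D`, while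
`Dp^{⊥g}` and `(J Dp)^{⊥g}` are exchanged because `J² = -1`.
-/

/-- For a bilinear form `h` on `V` and a subspace `W`, the `h`-orthogonal space
`W^{⊥h} = {v ∈ V : h(v, w) = 0 for all w ∈ W}`. -/
def perpBilin {V : Type*} [AddCommGroup V] [Module ℝ V]
    (h : V →ₗ[ℝ] V →ₗ[ℝ] ℝ) (W : Submodule ℝ V) : Submodule ℝ V where
  carrier := {v | ∀ w ∈ W, h v w = 0}
  add_mem' := by
    intro a b ha hb w hw
    simp [ha w hw, hb w hw]
  zero_mem' := by
    intro w hw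
    simp
  smul_mem' := by
    intro c a ha w hw
    simp [ha w hw]

section Norden

variable {V : Type*} [AddCommGroup V] [Module ℝ V] {J : V →ₗ[ℝ] V} {g : V →ₗ[ℝ] V →ₗ[ℝ] ℝ}

theorem mem_perpBilin_iff {U : Submodule ℝ V} {v : V} :
    v ∈ perpBilin g U ↔ ∀ u ∈ U, g v u = 0 :=
  Iff.rfl

theorem perpBilin_sup (g : V →ₗ[ℝ] V →ₗ[ℝ] ℝ) (U U' : Submodule ℝ V) :
    perpBilin g (U ⊔ U') = perpBilin g U ⊓ perpBilin g U' := by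
  ext v
  simp only [Submodule.mem_inf, mem_perpBilin_iff]
  refine ⟨fun h => ⟨fun u hu => h u (Submodule.mem_sup_left hu),
    fun u hu => h u (Submodule.mem_sup_right hu)⟩, ?_⟩
  rintro ⟨hU, hU'⟩ _ hw
  obtain ⟨u, hu, u', hu', rfl⟩ := Submodule.mem_sup.mp hw
  rw [map_add, hU u hu, hU' u' hu', add_zero]

theorem isAdjointPair_self_of_norden (hJ : ∀ x, J (J x) = -x)
    (hN : ∀ x y, g (J x) (J y) = -g x y) : g.IsAdjointPair g J J := fun x y => by
  calc g (J x) y = -g (J x) (J (J y)) := by rw [hJ, map_neg, neg_neg]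
    _ = g x (J y) := by rw [hN, neg_neg]

theorem mem_perpBilin_map_iff (hJ : ∀ x, J (J x) = -x) (hN : ∀ x y, g (J x) (J y) = -g x y)
    {U : Submodule ℝ V} {v : V} : v ∈ perpBilin g (U.map J) ↔ J v ∈ perpBilin g U := by
  simp only [mem_perpBilin_iff, Submodule.mem_map, forall_exists_index, and_imp,
    forall_apply_eq_imp_iff₂, ← isAdjointPair_self_of_norden hJ hN v]

theorem Submodule.map_eq_self_of_forall_mem (hJ : ∀ x, J (J x) = -x) {P : Submodule ℝ V}
    (hP : ∀ x ∈ P, J x ∈ P) : P.map J = P := by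
  refine le_antisymm (Submodule.map_le_iff_le_comap.mpr hP) fun x hx => ?_
  exact ⟨-J x, P.neg_mem (hP x hx), by rw [map_neg, hJ, neg_neg]⟩

end Norden

theorem cr_datum_screen_transversal_holomorphic_general
    (V : Type*) [AddCommGroup V] [Module ℝ V]
    (J : V →ₗ[ℝ] V) (hJ : ∀ x, J (J x) = -x)
    (g : V →ₗ[ℝ] V →ₗ[ℝ] ℝ)
    (hN : ∀ x y, g (J x) (J y) = -g x y)
    (W D Dp : Submodule ℝ V)
    (hsum : D ⊔ Dp = W)
    (hJD : Submodule.map J D = D) :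
    Submodule.map J (perpBilin g W ⊓ perpBilin g (Submodule.map J Dp))
      = perpBilin g W ⊓ perpBilin g (Submodule.map J Dp) := by
  refine Submodule.map_eq_self_of_forall_mem hJ fun x hx => ?_
  rw [← hsum, perpBilin_sup] at hx ⊢
  simp only [Submodule.mem_inf] at hx ⊢
  obtain ⟨⟨hxD, hxDp⟩, hxJDp⟩ := hx
  refine ⟨⟨?_, ?_⟩, ?_⟩
  · rwa [← mem_perpBilin_map_iff hJ hN, hJD]
  · rwa [← mem_perpBilin_map_iff hJ hN]
  · rw [mem_perpBilin_map_iff hJ hN, hJ]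
    exact neg_mem hxDp

/-- For a CR datum `(W, D, Dp)` in a Norden vector space
`(V, J, g)`, the `g`-orthogonal complement of `J(Dp)` inside `W^{⊥g}`, namely
`W^{⊥g} ∩ (J(Dp))^{⊥g}`, is `J`-invariant (holomorphic). -/
theorem cr_datum_screen_transversal_holomorphic
    (V : Type*) [AddCommGroup V] [Module ℝ V] [FiniteDimensional ℝ V]
    (J : V →ₗ[ℝ] V) (hJ : ∀ x, J (J x) = -x)
    (g : V →ₗ[ℝ] V →ₗ[ℝ] ℝ)
    (hsymm : ∀ x y, g x y = g y x)
    (hnd : ∀ x, (∀ y, g x y = 0) → x = 0)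
    (hN : ∀ x y, g (J x) (J y) = -g x y)
    (W D Dp : Submodule ℝ V)
    (hDW : D ≤ W) (hDpW : Dp ≤ W)
    (hsum : D ⊔ Dp = W) (hint : D ⊓ Dp = ⊥)
    (horth : ∀ x ∈ D, ∀ y ∈ Dp, g x y = 0)
    (hWnd : W ⊓ perpBilin g W = ⊥)
    (hJD : Submodule.map J D = D)
    (hJDp : Submodule.map J Dp ≤ perpBilin g W) :
    Submodule.map J (perpBilin g W ⊓ perpBilin g (Submodule.map J Dp))
      = perpBilin g W ⊓ perpBilin g (Submodule.map J Dp) :=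
  cr_datum_screen_transversal_holomorphic_general V J hJ g hN W D Dp hsum hJD
end

section
/- (Theorem 3.2, converse direction) Let (W, S, Rad, L, S') be a Radical transversal datum with respect to g̃. Then the subspaces S, Rad, L, S' are mutually g-orthogonal; consequently W^{⊥g} = L ⊕ S', the restriction of g to W is nondegenerate, and (W, S, Rad) is a CR datum for g: W = S ⊕ Rad with g(S, Rad) = 0, J(S) = S and J(Rad) ⊆ W^{⊥g}. -/
section

variable {V : Type*} [AddCommGroup V] [Module ℝ V]
  {h g : V →ₗ[ℝ] V →ₗ[ℝ] ℝ} {J : V →ₗ[ℝ] V} {A B C W U : Submodule ℝ V}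

theorem le_perpBilin_comm (hh : ∀ x y, h x y = h y x) :
    A ≤ perpBilin h B ↔ B ≤ perpBilin h A :=
  ⟨fun hAB y hy x hx => (hh y x).trans (hAB hx y hy),
    fun hBA x hx y hy => (hh x y).trans (hBA hy x hx)⟩

theorem perpBilin_sup_s10 : perpBilin h (B ⊔ C) = perpBilin h B ⊓ perpBilin h C := by
  ext v
  refine ⟨fun hv => ⟨fun b hb => hv b (Submodule.mem_sup_left hb),
    fun c hc => hv c (Submodule.mem_sup_right hc)⟩, ?_⟩
  rintro ⟨hvB, hvC⟩ w hw
  obtain ⟨b, hb, c, hc, rfl⟩ := Submodule.mem_sup.mp hw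
  rw [map_add, hvB b hb, hvC c hc, add_zero]

theorem inf_perpBilin_sup_eq_bot (hh : ∀ x y, h x y = h y x)
    (hB : B ⊓ perpBilin h B = ⊥) (hC : C ⊓ perpBilin h C = ⊥) (hBC : B ≤ perpBilin h C) :
    (B ⊔ C) ⊓ perpBilin h (B ⊔ C) = ⊥ := by
  rw [Submodule.eq_bot_iff]
  rintro x ⟨hx, hxperp⟩
  obtain ⟨b, hb, c, hc, rfl⟩ := Submodule.mem_sup.mp hx
  rw [perpBilin_sup_s10] at hxperp
  have hb0 : b = 0 := by
    have hbperp : b ∈ perpBilin h B := by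
      simpa using sub_mem hxperp.1 ((le_perpBilin_comm hh).1 hBC hc)
    exact (Submodule.eq_bot_iff _).1 hB b ⟨hb, hbperp⟩
  have hc0 : c = 0 := by
    have hcperp : c ∈ perpBilin h C := by
      simpa using sub_mem hxperp.2 (hBC hb)
    exact (Submodule.eq_bot_iff _).1 hC c ⟨hc, hcperp⟩
  rw [hb0, hc0, add_zero]

theorem comp_apply_comm_of_sq_eq_neg (hJ : ∀ x, J (J x) = -x) (hN : ∀ x y, g (J x) (J y) = -g x y)
    (hsymm : ∀ x y, g x y = g y x) : ∀ x y, (g ∘ₗ J) x y = (g ∘ₗ J) y x := by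
  intro x y
  have h := hN (J x) y
  rw [hJ x, map_neg, LinearMap.neg_apply, neg_inj] at h
  rw [LinearMap.comp_apply, LinearMap.comp_apply, ← h, hsymm]

theorem perpBilin_le_perpBilin_comp_map (hN : ∀ x y, g (J x) (J y) = -g x y) :
    perpBilin g B ≤ perpBilin (g ∘ₗ J) (B.map J) := by
  rintro x hx _ ⟨b, hb, rfl⟩
  rw [LinearMap.comp_apply, hN, hx b hb, neg_zero]

theorem inf_perpBilin_eq_bot_of_comp_map (hN : ∀ x y, g (J x) (J y) = -g x y)
    (hA : A ⊓ perpBilin (g ∘ₗ J) (B.map J) = ⊥) : A ⊓ perpBilin g B = ⊥ :=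
  eq_bot_iff.2 <| hA ▸ inf_le_inf_left A (perpBilin_le_perpBilin_comp_map hN)

theorem le_perpBilin_of_le_map (hA : A ≤ B.map J) (hB : B ≤ perpBilin (g ∘ₗ J) C) :
    A ≤ perpBilin g C := by
  intro x hx
  obtain ⟨b, hb, rfl⟩ := hA hx
  exact hB hb

theorem perpBilin_eq_of_sup_eq_top (hW : W ⊓ perpBilin h W = ⊥) (hWU : W ⊔ U = ⊤)
    (hU : U ≤ perpBilin h W) : perpBilin h W = U :=
  (eq_of_le_of_inf_le_of_sup_le hU (z := W) (by rw [inf_comm, hW]; exact bot_le)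
    (by rw [sup_comm U, hWU]; exact le_top)).symm

theorem map_map_eq_self_of_sq_eq_neg (hJ : ∀ x, J (J x) = -x) (A : Submodule ℝ V) :
    (A.map J).map J = A := by
  rw [← Submodule.map_comp, show J ∘ₗ J = -LinearMap.id from LinearMap.ext hJ,
    Submodule.map_neg, Submodule.map_id]

end

theorem radical_transversal_gives_cr_datum_general
    (V : Type*) [AddCommGroup V] [Module ℝ V]
    (J : V →ₗ[ℝ] V) (hJ : ∀ x, J (J x) = -x)
    (g : V →ₗ[ℝ] V →ₗ[ℝ] ℝ)
    (hsymm : ∀ x y, g x y = g y x)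
    (hN : ∀ x y, g (J x) (J y) = -g x y)
    (W S Rad L S' : Submodule ℝ V)
    (hspan : S ⊔ Rad ⊔ L ⊔ S' = ⊤)
    (hW : W = S ⊔ Rad)
    (hRad : Rad = W ⊓ perpBilin (g ∘ₗ J) W)
    (hSnd : S ⊓ perpBilin (g ∘ₗ J) S = ⊥)
    (hS'perp : S' ≤ perpBilin (g ∘ₗ J) W)
    (hLL : ∀ x ∈ L, ∀ y ∈ L, g (J x) y = 0)
    (hLS : ∀ x ∈ L, ∀ y ∈ S, g (J x) y = 0)
    (hLS' : ∀ x ∈ L, ∀ y ∈ S', g (J x) y = 0)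
    (hpair2 : ∀ ξ ∈ Rad, (∀ n ∈ L, g (J n) ξ = 0) → ξ = 0)
    (hJRad : Submodule.map J Rad = L)
    (hJS : Submodule.map J S = S) :
    (∀ x ∈ S, ∀ y ∈ Rad, g x y = 0) ∧
    (∀ x ∈ S, ∀ y ∈ L, g x y = 0) ∧
    (∀ x ∈ S, ∀ y ∈ S', g x y = 0) ∧
    (∀ x ∈ Rad, ∀ y ∈ L, g x y = 0) ∧
    (∀ x ∈ Rad, ∀ y ∈ S', g x y = 0) ∧
    (∀ x ∈ L, ∀ y ∈ S', g x y = 0) ∧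
    perpBilin g W = L ⊔ S' ∧
    W ⊓ perpBilin g W = ⊥ ∧
    Submodule.map J Rad ≤ perpBilin g W := by
  have hg' := comp_apply_comm_of_sq_eq_neg hJ hN hsymm
  have hSW : S ≤ W := hW ▸ le_sup_left
  have hRadW : Rad ≤ W := hW ▸ le_sup_right
  have hRadJL : Rad ≤ L.map J := (hJRad ▸ map_map_eq_self_of_sq_eq_neg hJ Rad).ge
  have hW_Rad : W ≤ perpBilin (g ∘ₗ J) Rad := (le_perpBilin_comm hg').1 (hRad.le.trans inf_le_right)
  have hW_S' : W ≤ perpBilin (g ∘ₗ J) S' := (le_perpBilin_comm hg').1 hS'perp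
  have hS_Rad : S ≤ perpBilin g Rad := le_perpBilin_of_le_map hJS.ge (hSW.trans hW_Rad)
  have hS_L : S ≤ perpBilin g L := le_perpBilin_of_le_map hJS.ge ((le_perpBilin_comm hg').1 hLS)
  have hS_S' : S ≤ perpBilin g S' := le_perpBilin_of_le_map hJS.ge (hSW.trans hW_S')
  have hRad_L : Rad ≤ perpBilin g L := le_perpBilin_of_le_map hRadJL hLL
  have hRad_S' : Rad ≤ perpBilin g S' := le_perpBilin_of_le_map hRadJL hLS'
  have hL_S' : L ≤ perpBilin g S' := le_perpBilin_of_le_map hJRad.ge (hRadW.trans hW_S')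
  have hLS'_W : L ⊔ S' ≤ perpBilin g W := by
    rw [le_perpBilin_comm hsymm, perpBilin_sup_s10, hW]
    exact sup_le (le_inf hS_L hS_S') (le_inf hRad_L hRad_S')
  have hRad_nd : Rad ⊓ perpBilin (g ∘ₗ J) (Rad.map J) = ⊥ := by
    refine (Submodule.eq_bot_iff _).2 fun ξ ⟨hξ, hξperp⟩ => hpair2 ξ hξ fun n hn => ?_
    exact (hg' n ξ).trans (hξperp n (hJRad ▸ hn))
  have hW_nd : W ⊓ perpBilin g W = ⊥ := hW ▸ inf_perpBilin_sup_eq_bot hsymm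
    (inf_perpBilin_eq_bot_of_comp_map hN (hJS.symm ▸ hSnd))
    (inf_perpBilin_eq_bot_of_comp_map hN hRad_nd) hS_Rad
  have hperp : perpBilin g W = L ⊔ S' :=
    perpBilin_eq_of_sup_eq_top hW_nd (by rw [hW, ← sup_assoc, hspan]) hLS'_W
  exact ⟨hS_Rad, hS_L, hS_S', hRad_L, hRad_S', hL_S', hperp, hW_nd, hJRad ▸ hperp ▸ le_sup_left⟩

/-- **Theorem 3.2, converse direction.** Let `(W, S, Rad, L, S')` be
a Radical transversal datum with respect to the associated metric `g̃ = g ∘ J`.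
Then `S`, `Rad`, `L`, `S'` are mutually `g`-orthogonal; consequently
`W^{⊥g} = L ⊕ S'`, the restriction of `g` to `W` is nondegenerate, and
`(W, S, Rad)` is a CR datum for `g`: `W = S ⊕ Rad` with `g(S, Rad) = 0`,
`J(S) = S` and `J(Rad) ⊆ W^{⊥g}`. -/
theorem radical_transversal_gives_cr_datum
    (V : Type*) [AddCommGroup V] [Module ℝ V] [FiniteDimensional ℝ V]
    (J : V →ₗ[ℝ] V) (hJ : ∀ x, J (J x) = -x)
    (g : V →ₗ[ℝ] V →ₗ[ℝ] ℝ)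
    (hsymm : ∀ x y, g x y = g y x)
    (hnd : ∀ x, (∀ y, g x y = 0) → x = 0)
    (hN : ∀ x y, g (J x) (J y) = -g x y)
    (W S Rad L S' : Submodule ℝ V)
    (hind1 : S ⊓ Rad = ⊥)
    (hind2 : (S ⊔ Rad) ⊓ L = ⊥)
    (hind3 : (S ⊔ Rad ⊔ L) ⊓ S' = ⊥)
    (hspan : S ⊔ Rad ⊔ L ⊔ S' = ⊤)
    (hW : W = S ⊔ Rad)
    (hRad : Rad = W ⊓ perpBilin (g ∘ₗ J) W) (hRadne : Rad ≠ ⊥)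
    (hSnd : S ⊓ perpBilin (g ∘ₗ J) S = ⊥)
    (hS'perp : S' ≤ perpBilin (g ∘ₗ J) W)
    (hS'nd : S' ⊓ perpBilin (g ∘ₗ J) S' = ⊥)
    (hLL : ∀ x ∈ L, ∀ y ∈ L, g (J x) y = 0)
    (hLS : ∀ x ∈ L, ∀ y ∈ S, g (J x) y = 0)
    (hLS' : ∀ x ∈ L, ∀ y ∈ S', g (J x) y = 0)
    (hpair1 : ∀ n ∈ L, (∀ ξ ∈ Rad, g (J n) ξ = 0) → n = 0)
    (hpair2 : ∀ ξ ∈ Rad, (∀ n ∈ L, g (J n) ξ = 0) → ξ = 0)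
    (hJRad : Submodule.map J Rad = L)
    (hJS : Submodule.map J S = S) :
    (∀ x ∈ S, ∀ y ∈ Rad, g x y = 0) ∧
    (∀ x ∈ S, ∀ y ∈ L, g x y = 0) ∧
    (∀ x ∈ S, ∀ y ∈ S', g x y = 0) ∧
    (∀ x ∈ Rad, ∀ y ∈ L, g x y = 0) ∧
    (∀ x ∈ Rad, ∀ y ∈ S', g x y = 0) ∧
    (∀ x ∈ L, ∀ y ∈ S', g x y = 0) ∧
    perpBilin g W = L ⊔ S' ∧
    W ⊓ perpBilin g W = ⊥ ∧
    Submodule.map J Rad ≤ perpBilin g W :=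
  radical_transversal_gives_cr_datum_general V J hJ g hsymm hN W S Rad L S' hspan hW hRad hSnd
    hS'perp hLL hLS hLS' hpair2 hJRad hJS
end

section
/- (Corollary 3.1, pointwise form) Let dim V = 2n and let (W, D, D⊥) be a CR datum. Then W is generic, i.e. dim D⊥ = 2n - dim W, if and only if W is coisotropic with respect to g̃, i.e. W^{⊥g̃} ⊆ W. -/
/-!
Since `g̃ = g ∘ J` and `J⁻¹ = -J`, the `g̃`-orthogonal of `W` is `J(W^{⊥g})`, and `W^{⊥g}` has
dimension `2n - dim W` because `g` is nondegenerate. The CR condition puts `J(D⊥)` inside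
`W^{⊥g}`, so `W` is generic exactly when `J(D⊥) = W^{⊥g}`, i.e. when `J(W^{⊥g}) = D⊥`.
Conversely, if `J(W^{⊥g}) ⊆ W` then `W^{⊥g} ⊆ J W = D ⊕ J(D⊥)`, and since `D ∩ W^{⊥g} = 0`
(as `W ∩ W^{⊥g} = 0`), the modular law forces `W^{⊥g} = J(D⊥)`.
-/

open Module

theorem eq_of_le_of_le_sup_of_inf_eq_bot {α : Type*} [Lattice α] [OrderBot α] [IsModularLattice α]
    {a b c : α} (hab : a ≤ b) (hb : b ≤ c ⊔ a) (hcb : c ⊓ b = ⊥) : b = a :=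
  calc b = (a ⊔ c) ⊓ b := (inf_eq_right.mpr (sup_comm c a ▸ hb)).symm
    _ = a ⊔ c ⊓ b := sup_inf_assoc_of_le c hab
    _ = a := by rw [hcb, sup_bot_eq]

section SquareEqNeg

variable {R M : Type*} [Ring R] [AddCommGroup M] [Module R M] {J : M →ₗ[R] M}

lemma injective_of_sq_eq_neg (hJ : ∀ x, J (J x) = -x) : Function.Injective J :=
  fun x y hxy => by simpa [hJ] using congrArg J hxy

lemma map_map_of_sq_eq_neg (hJ : ∀ x, J (J x) = -x) (S : Submodule R M) :
    (S.map J).map J = S := by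
  rw [← Submodule.map_comp, show J ∘ₗ J = -LinearMap.id from LinearMap.ext hJ,
    Submodule.map_neg, Submodule.map_id]

lemma comap_eq_map_of_sq_eq_neg (hJ : ∀ x, J (J x) = -x) (S : Submodule R M) :
    S.comap J = S.map J := by
  ext x
  refine ⟨fun hx => ⟨-J x, S.neg_mem hx, by rw [map_neg, hJ, neg_neg]⟩, ?_⟩
  rintro ⟨y, hy, rfl⟩
  simpa [hJ] using hy

lemma finrank_map_of_sq_eq_neg (hJ : ∀ x, J (J x) = -x) (S : Submodule R M) :
    finrank R (S.map J) = finrank R S :=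
  (Submodule.equivMapOfInjective J (injective_of_sq_eq_neg hJ) S).finrank_eq.symm

end SquareEqNeg

section Perp

variable {V : Type*} [AddCommGroup V] [Module ℝ V]

lemma perpBilin_comp (h : V →ₗ[ℝ] V →ₗ[ℝ] ℝ) (f : V →ₗ[ℝ] V) (W : Submodule ℝ V) :
    perpBilin (h ∘ₗ f) W = (perpBilin h W).comap f :=
  rfl

lemma perpBilin_eq_orthogonal {h : V →ₗ[ℝ] V →ₗ[ℝ] ℝ} (hh : h.IsRefl) (W : Submodule ℝ V) :
    perpBilin h W = LinearMap.BilinForm.orthogonal h W := by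
  ext x
  exact ⟨fun hx w hw => hh _ _ (hx w hw), fun hx w hw => hh _ _ (hx w hw)⟩

lemma finrank_perpBilin [FiniteDimensional ℝ V] {h : V →ₗ[ℝ] V →ₗ[ℝ] ℝ} (hh : h.IsRefl)
    (hsep : h.SeparatingLeft) (W : Submodule ℝ V) :
    finrank ℝ (perpBilin h W) = finrank ℝ V - finrank ℝ W := by
  rw [perpBilin_eq_orthogonal hh,
    LinearMap.BilinForm.finrank_orthogonal (hh.nondegenerate_iff_separatingLeft.mpr hsep)]

end Perp

theorem generic_iff_coisotropic_general
    (V : Type*) [AddCommGroup V] [Module ℝ V] [FiniteDimensional ℝ V]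
    (J : V →ₗ[ℝ] V) (hJ : ∀ x, J (J x) = -x)
    (g : V →ₗ[ℝ] V →ₗ[ℝ] ℝ)
    (hsymm : ∀ x y, g x y = g y x)
    (hnd : ∀ x, (∀ y, g x y = 0) → x = 0)
    (n : ℕ) (hdim : Module.finrank ℝ V = 2 * n)
    (W D Dp : Submodule ℝ V)
    (hDW : D ≤ W) (hDpW : Dp ≤ W)
    (hsum : D ⊔ Dp = W)
    (hWnd : W ⊓ perpBilin g W = ⊥)
    (hJD : Submodule.map J D = D)
    (hJDp : Submodule.map J Dp ≤ perpBilin g W) :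
    Module.finrank ℝ Dp = 2 * n - Module.finrank ℝ W ↔
      perpBilin (g ∘ₗ J) W ≤ W := by
  rw [perpBilin_comp, comap_eq_map_of_sq_eq_neg hJ]
  set P := perpBilin g W
  have hP : finrank ℝ P = 2 * n - finrank ℝ W := by
    rw [finrank_perpBilin (fun x y hxy => (hsymm y x).trans hxy) hnd, hdim]
  rw [← finrank_map_of_sq_eq_neg hJ Dp, ← hP]
  constructor
  · intro hgen
    have hDpP : Dp.map J = P := Submodule.eq_of_le_of_finrank_le hJDp hgen.ge
    rwa [← hDpP, map_map_of_sq_eq_neg hJ]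
  · intro hco
    have hPle : P ≤ D ⊔ Dp.map J :=
      calc P = (P.map J).map J := (map_map_of_sq_eq_neg hJ P).symm
        _ ≤ W.map J := Submodule.map_mono hco
        _ = D ⊔ Dp.map J := by rw [← hsum, Submodule.map_sup, hJD]
    have hDP : D ⊓ P = ⊥ := eq_bot_iff.mpr (hWnd ▸ inf_le_inf_right P hDW)
    rw [eq_of_le_of_le_sup_of_inf_eq_bot hJDp hPle hDP]

/-- **Corollary 3.1, pointwise form.** Let `dim V = 2n` and let
`(W, D, Dp)` be a CR datum in the Norden vector space `(V, J, g)`.  Then `W` is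
generic, i.e. `dim Dp = 2n - dim W`, if and only if `W` is coisotropic with
respect to the associated metric `g̃ = g ∘ J`, i.e. `W^{⊥g̃} ⊆ W`. -/
theorem generic_iff_coisotropic
    (V : Type*) [AddCommGroup V] [Module ℝ V] [FiniteDimensional ℝ V]
    (J : V →ₗ[ℝ] V) (hJ : ∀ x, J (J x) = -x)
    (g : V →ₗ[ℝ] V →ₗ[ℝ] ℝ)
    (hsymm : ∀ x y, g x y = g y x)
    (hnd : ∀ x, (∀ y, g x y = 0) → x = 0)
    (hN : ∀ x y, g (J x) (J y) = -g x y)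
    (n : ℕ) (hdim : Module.finrank ℝ V = 2 * n)
    (W D Dp : Submodule ℝ V)
    (hDW : D ≤ W) (hDpW : Dp ≤ W)
    (hsum : D ⊔ Dp = W) (hint : D ⊓ Dp = ⊥)
    (horth : ∀ x ∈ D, ∀ y ∈ Dp, g x y = 0)
    (hWnd : W ⊓ perpBilin g W = ⊥)
    (hJD : Submodule.map J D = D)
    (hJDp : Submodule.map J Dp ≤ perpBilin g W) :
    Module.finrank ℝ Dp = 2 * n - Module.finrank ℝ W ↔
      perpBilin (g ∘ₗ J) W ≤ W :=
  generic_iff_coisotropic_general V J hJ g hsymm hnd n hdim W D Dp hDW hDpW hsum hWnd hJD hJDp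
end
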